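/- arXiv:2211.10826 — 6 statements merged into one kernel-verified Lean document; each statement's English description precedes it below -/
import Mathlib

section
/- For any nonzero real numbers ξ1, ξ2, ξ3 satisfying ξ1 + ξ2 + ξ3 = 0 and any choice of signs σ1, σ2, σ3 ∈ {−1, +1}, one has σ1·|ξ1|^{1/2} + σ2·|ξ2|^{1/2} + σ3·|ξ3|^{1/2} ≠ 0. In other words, there are no nontrivial quadratic (three-wave) resonances for the gravity water waves dispersion relation Λ(ξ) = |ξ|^{1/2}. -/
/-- Key lemma: if `x + y + z = 0` with `y, z ≠ 0`, then `√|x| ≠ √|y| + √|z|`. -/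
lemma no_res_key (x y z : ℝ) (hy : y ≠ 0) (hz : z ≠ 0) (hs : x + y + z = 0)
    (h : Real.sqrt |x| = Real.sqrt |y| + Real.sqrt |z|) : False := by
  have hby : (0:ℝ) < Real.sqrt |y| := Real.sqrt_pos.mpr (abs_pos.mpr hy)
  have hbz : (0:ℝ) < Real.sqrt |z| := Real.sqrt_pos.mpr (abs_pos.mpr hz)
  have hx' : |x| = |y + z| := by rw [show x = -(y + z) by linarith, abs_neg]
  have htri : |x| ≤ |y| + |z| := hx' ▸ abs_add_le y z
  have hsq : |x| = |y| + |z| + 2 * (Real.sqrt |y| * Real.sqrt |z|) := by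
    nlinarith [Real.sq_sqrt (abs_nonneg x), Real.sq_sqrt (abs_nonneg y),
      Real.sq_sqrt (abs_nonneg z)]
  nlinarith [mul_pos hby hbz]

/-- There are no nontrivial quadratic (three-wave) resonances for the gravity water waves
dispersion relation `Λ(ξ) = |ξ|^(1/2)`: for nonzero real frequencies summing to zero and any
choice of signs, the signed sum of the square roots of the absolute values is nonzero. -/
theorem no_quadratic_resonances (ξ1 ξ2 ξ3 σ1 σ2 σ3 : ℝ)
    (h1 : ξ1 ≠ 0) (h2 : ξ2 ≠ 0) (h3 : ξ3 ≠ 0)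
    (hsum : ξ1 + ξ2 + ξ3 = 0)
    (hσ1 : σ1 = 1 ∨ σ1 = -1) (hσ2 : σ2 = 1 ∨ σ2 = -1) (hσ3 : σ3 = 1 ∨ σ3 = -1) :
    σ1 * Real.sqrt |ξ1| + σ2 * Real.sqrt |ξ2| + σ3 * Real.sqrt |ξ3| ≠ 0 := by
  intro heq
  have p1 : (0:ℝ) < Real.sqrt |ξ1| := Real.sqrt_pos.mpr (abs_pos.mpr h1)
  have p2 : (0:ℝ) < Real.sqrt |ξ2| := Real.sqrt_pos.mpr (abs_pos.mpr h2)
  have p3 : (0:ℝ) < Real.sqrt |ξ3| := Real.sqrt_pos.mpr (abs_pos.mpr h3)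
  rcases hσ1 with rfl | rfl <;> rcases hσ2 with rfl | rfl <;> rcases hσ3 with rfl | rfl
  · linarith
  · exact no_res_key ξ3 ξ1 ξ2 h1 h2 (by linarith) (by linarith)
  · exact no_res_key ξ2 ξ1 ξ3 h1 h3 (by linarith) (by linarith)
  · exact no_res_key ξ1 ξ2 ξ3 h2 h3 (by linarith) (by linarith)
  · exact no_res_key ξ1 ξ2 ξ3 h2 h3 (by linarith) (by linarith)
  · exact no_res_key ξ2 ξ1 ξ3 h1 h3 (by linarith) (by linarith)
  · exact no_res_key ξ3 ξ1 ξ2 h1 h2 (by linarith) (by linarith)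
  · linarith
end

section
/- Let ξ2, ξ3, ξ4 ∈ [0, ∞) with ξ3 + ξ4 > 0, and set ξ1 := −(ξ2 + ξ3 + ξ4). Then |ξ1|^{1/2} + ξ2^{1/2} − ξ3^{1/2} − ξ4^{1/2} = 0 if and only if ξ2 · (√ξ3 + √ξ4)² = ξ3·ξ4. Moreover, when this holds one also has −ξ1 · (√ξ3 + √ξ4)² = (ξ3 + ξ4 + √(ξ3 ξ4))². -/
/-- Characterization of the vanishing of the four-wave resonance function
`Φ = |ξ1|^(1/2) + |ξ2|^(1/2) - |ξ3|^(1/2) - |ξ4|^(1/2)` in the Benjamin–Feir configuration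
`ξ1 = -(ξ2 + ξ3 + ξ4) ≤ 0 ≤ ξ2, ξ3, ξ4`, together with the resulting formula for `-ξ1`. -/
theorem benjamin_feir_characterization (ξ1 ξ2 ξ3 ξ4 : ℝ)
    (h2 : 0 ≤ ξ2) (h3 : 0 ≤ ξ3) (h4 : 0 ≤ ξ4) (hpos : 0 < ξ3 + ξ4)
    (hξ1 : ξ1 = -(ξ2 + ξ3 + ξ4)) :
    (Real.sqrt |ξ1| + Real.sqrt ξ2 - Real.sqrt ξ3 - Real.sqrt ξ4 = 0 ↔
      ξ2 * (Real.sqrt ξ3 + Real.sqrt ξ4) ^ 2 = ξ3 * ξ4) ∧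
    (Real.sqrt |ξ1| + Real.sqrt ξ2 - Real.sqrt ξ3 - Real.sqrt ξ4 = 0 →
      -ξ1 * (Real.sqrt ξ3 + Real.sqrt ξ4) ^ 2 = (ξ3 + ξ4 + Real.sqrt (ξ3 * ξ4)) ^ 2) := by
  have habs : |ξ1| = ξ2 + ξ3 + ξ4 := by
    rw [hξ1, abs_neg, abs_of_nonneg (by linarith)]
  set a := Real.sqrt ξ2 with ha
  set b := Real.sqrt ξ3 with hb
  set c := Real.sqrt ξ4 with hc
  have ha0 : 0 ≤ a := Real.sqrt_nonneg _
  have hb0 : 0 ≤ b := Real.sqrt_nonneg _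
  have hc0 : 0 ≤ c := Real.sqrt_nonneg _
  have ha2 : a ^ 2 = ξ2 := Real.sq_sqrt h2
  have hb2 : b ^ 2 = ξ3 := Real.sq_sqrt h3
  have hc2 : c ^ 2 = ξ4 := Real.sq_sqrt h4
  have hbc : Real.sqrt (ξ3 * ξ4) = b * c := Real.sqrt_mul h3 ξ4
  have hs : 0 < b + c := by nlinarith [mul_nonneg hb0 hc0]
  have hS2 : (Real.sqrt |ξ1|) ^ 2 = a ^ 2 + b ^ 2 + c ^ 2 := by
    rw [Real.sq_sqrt (abs_nonneg _), habs, ha2, hb2, hc2]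
  have hS0 : 0 ≤ Real.sqrt |ξ1| := Real.sqrt_nonneg _
  -- key equivalence: vanishing ↔ a*(b+c) = b*c
  have fwd : Real.sqrt |ξ1| + a - b - c = 0 → a * (b + c) = b * c := by
    intro h
    have hSeq : Real.sqrt |ξ1| = b + c - a := by linarith
    have h' : (b + c - a) ^ 2 = a ^ 2 + b ^ 2 + c ^ 2 := by rw [← hSeq]; exact hS2
    nlinarith [h']
  constructor
  · constructor
    · intro h
      have key := fwd h
      rw [← ha2, ← hb2, ← hc2]
      linear_combination (a * (b + c) + b * c) * key
    · intro hk
      have hsq : (a * (b + c)) ^ 2 = (b * c) ^ 2 := by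
        linear_combination (b + c) ^ 2 * ha2 + hk - ξ3 * hc2 - c ^ 2 * hb2
      have key : a * (b + c) = b * c := by
        nlinarith [hsq, mul_nonneg ha0 hs.le, mul_nonneg hb0 hc0]
      have hnn : 0 ≤ b + c - a := by nlinarith [key, mul_nonneg hb0 hc0]
      have habs2 : |ξ1| = (b + c - a) ^ 2 := by
        rw [habs]; linear_combination -ha2 - hb2 - hc2 + 2 * key
      have : Real.sqrt |ξ1| = b + c - a := by
        rw [habs2, Real.sqrt_sq hnn]
      linarith
  · intro h
    have key := fwd h
    rw [hbc, hξ1]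
    rw [← ha2, ← hb2, ← hc2]
    linear_combination (a * (b + c) + b * c) * key
end

section
/- The set {(ξ1, ξ2, ξ3, ξ4) ∈ ℝ⁴ : ξ1 < 0, ξ2 > 0, ξ3 > 0, ξ4 > 0, ξ1 + ξ2 + ξ3 + ξ4 = 0, and |ξ1|^{1/2} + |ξ2|^{1/2} = |ξ3|^{1/2} + |ξ4|^{1/2}} is equal to the two-parameter family {(−λ(b² + b + 1)², λb², λ(b + 1)², λ(b + 1)²b²) : λ > 0, b > 0}. -/
/-!
Writing `a, b, c, d` for the square roots of `|ξ1|, …, |ξ4|`, the resonance reads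
`a + b = c + d` and the momentum condition reads `a² = b² + c² + d²`. Substituting
`a = c + d - b` turns the latter into `b (c + d) = c d`, i.e. `b` is half the harmonic mean of
`c` and `d`. Scaling by `μ = c² / (c + d)` and putting `t = d / c` gives `b = μ t`,
`c = μ (t + 1)`, `d = μ t (t + 1)` and `a = μ (t² + t + 1)`; squaring yields the family
with `λ = μ²`.
-/

lemma sq_eq_sum_sq_iff_mul_add_eq_mul {R : Type*} [CommRing R] [NoZeroDivisors R] [CharZero R]
    {a b c d : R} (h : a + b = c + d) :
    a ^ 2 = b ^ 2 + c ^ 2 + d ^ 2 ↔ b * (c + d) = c * d := by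
  obtain rfl : a = c + d - b := eq_sub_of_add_eq h
  constructor
  · intro h'
    have h2 : (2 : R) * (b * (c + d)) = 2 * (c * d) := by linear_combination -h'
    exact mul_left_cancel₀ two_ne_zero h2
  · intro h'
    linear_combination -2 * h'

lemma exists_param_of_mul_add_eq_mul {b c d : ℝ} (hc : 0 < c) (hd : 0 < d)
    (h : b * (c + d) = c * d) :
    ∃ μ > 0, ∃ t > 0, b = μ * t ∧ c = μ * (t + 1) ∧ d = μ * (t + 1) * t := by
  refine ⟨c ^ 2 / (c + d), by positivity, d / c, by positivity, ?_, ?_, ?_⟩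
  · rw [eq_comm, div_mul_div_comm, div_eq_iff (by positivity)]
    linear_combination -c * h
  · field_simp
    ring
  · field_simp
    ring

lemma Real.sqrt_abs_mul_sq (l c : ℝ) : √|l * c ^ 2| = √|l| * |c| := by
  rw [abs_mul, abs_sq, Real.sqrt_mul (abs_nonneg l), Real.sqrt_sq_eq_abs]

lemma exists_family_of_resonance {x1 x2 x3 x4 : ℝ} (h1 : x1 < 0) (h2 : 0 < x2) (h3 : 0 < x3)
    (h4 : 0 < x4) (hsum : x1 + x2 + x3 + x4 = 0) (hres : √|x1| + √|x2| = √|x3| + √|x4|) :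
    ∃ l : ℝ, 0 < l ∧ ∃ t : ℝ, 0 < t ∧
      (x1, x2, x3, x4) = (-(l * (t ^ 2 + t + 1) ^ 2), l * t ^ 2, l * (t + 1) ^ 2,
        l * (t + 1) ^ 2 * t ^ 2) := by
  have e1 : x1 = -√|x1| ^ 2 := by rw [Real.sq_sqrt (abs_nonneg _), abs_of_neg h1, neg_neg]
  have e2 : x2 = √|x2| ^ 2 := by rw [Real.sq_sqrt (abs_nonneg _), abs_of_pos h2]
  have e3 : x3 = √|x3| ^ 2 := by rw [Real.sq_sqrt (abs_nonneg _), abs_of_pos h3]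
  have e4 : x4 = √|x4| ^ 2 := by rw [Real.sq_sqrt (abs_nonneg _), abs_of_pos h4]
  have hmul := (sq_eq_sum_sq_iff_mul_add_eq_mul hres).1
    (by linear_combination e1 + e2 + e3 + e4 - hsum)
  obtain ⟨μ, hμ, t, ht, hb, hc, hd⟩ :=
    exists_param_of_mul_add_eq_mul (Real.sqrt_pos.2 (abs_pos_of_pos h3))
      (Real.sqrt_pos.2 (abs_pos_of_pos h4)) hmul
  have ha : √|x1| = μ * (t ^ 2 + t + 1) := by linear_combination hres - hb + hc + hd
  refine ⟨μ ^ 2, by positivity, t, ht, ?_⟩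
  rw [e1, e2, e3, e4, ha, hb, hc, hd]
  simp only [Prod.mk.injEq]
  exact ⟨by ring, by ring, by ring, by ring⟩

/-- The set of Benjamin–Feir resonances (four-wave resonances for `Λ(ξ) = |ξ|^(1/2)` in the
sign configuration `(+,+,-,-)` with `ξ1 < 0` and `ξ2, ξ3, ξ4 > 0`) coincides with the explicit
two-parameter family `(-λ(b²+b+1)², λb², λ(b+1)², λ(b+1)²b²)`, `λ > 0`, `b > 0`. -/
theorem benjamin_feir_family :
    {p : ℝ × ℝ × ℝ × ℝ | p.1 < 0 ∧ 0 < p.2.1 ∧ 0 < p.2.2.1 ∧ 0 < p.2.2.2 ∧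
        p.1 + p.2.1 + p.2.2.1 + p.2.2.2 = 0 ∧
        Real.sqrt |p.1| + Real.sqrt |p.2.1| = Real.sqrt |p.2.2.1| + Real.sqrt |p.2.2.2|} =
      {p : ℝ × ℝ × ℝ × ℝ | ∃ l : ℝ, 0 < l ∧ ∃ b : ℝ, 0 < b ∧
        p = (-(l * (b ^ 2 + b + 1) ^ 2), l * b ^ 2, l * (b + 1) ^ 2,
          l * (b + 1) ^ 2 * b ^ 2)} := by
  ext p
  simp only [Set.mem_ofPred_eq]
  constructor
  · obtain ⟨x1, x2, x3, x4⟩ := p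
    rintro ⟨h1, h2, h3, h4, hsum, hres⟩
    exact exists_family_of_resonance h1 h2 h3 h4 hsum hres
  · rintro ⟨l, hl, t, ht, rfl⟩
    have ht1 : 0 < t + 1 := by positivity
    refine ⟨neg_neg_of_pos (by positivity), by positivity, by positivity,
      by positivity, by ring, ?_⟩
    rw [abs_neg, show l * (t + 1) ^ 2 * t ^ 2 = l * ((t + 1) * t) ^ 2 by ring]
    simp only [Real.sqrt_abs_mul_sq, abs_of_pos hl, abs_of_pos ht, abs_of_pos ht1,
      abs_of_pos (by positivity : 0 < t ^ 2 + t + 1), abs_of_pos (by positivity : 0 < (t + 1) * t)]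
    ring
end

section
/- Let ξ1, ξ2 ∈ [0, ∞) and ξ3, ξ4 ∈ (−∞, 0] with ξ1 + ξ2 + ξ3 + ξ4 = 0. Then (√ξ1 + √ξ2 − √|ξ3| − √|ξ4|) · (√(ξ1 ξ2) + √(ξ3 ξ4)) · (√ξ1 + √ξ2 + √|ξ3| + √|ξ4|) = 2·(ξ1·ξ2 − ξ3·ξ4) = −2·(ξ2 + ξ3)·(ξ2 + ξ4). -/
/-- Division-free factorization of the four-wave resonance function
`Φ = |ξ1|^(1/2) + |ξ2|^(1/2) - |ξ3|^(1/2) - |ξ4|^(1/2)` on the hyperplane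
`ξ1 + ξ2 + ξ3 + ξ4 = 0` in the sign configuration `(+,+,-,-)`. -/
theorem phase_factorization_ppmm (ξ1 ξ2 ξ3 ξ4 : ℝ)
    (h1 : 0 ≤ ξ1) (h2 : 0 ≤ ξ2) (h3 : ξ3 ≤ 0) (h4 : ξ4 ≤ 0)
    (hsum : ξ1 + ξ2 + ξ3 + ξ4 = 0) :
    (Real.sqrt ξ1 + Real.sqrt ξ2 - Real.sqrt |ξ3| - Real.sqrt |ξ4|) *
          (Real.sqrt (ξ1 * ξ2) + Real.sqrt (ξ3 * ξ4)) *
          (Real.sqrt ξ1 + Real.sqrt ξ2 + Real.sqrt |ξ3| + Real.sqrt |ξ4|) =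
        2 * (ξ1 * ξ2 - ξ3 * ξ4) ∧
      2 * (ξ1 * ξ2 - ξ3 * ξ4) = -(2 * (ξ2 + ξ3) * (ξ2 + ξ4)) := by
  have e3 : |ξ3| = -ξ3 := abs_of_nonpos h3
  have e4 : |ξ4| = -ξ4 := abs_of_nonpos h4
  set a := Real.sqrt ξ1
  set b := Real.sqrt ξ2
  set c := Real.sqrt |ξ3|
  set d := Real.sqrt |ξ4|
  have ha : a ^ 2 = ξ1 := Real.sq_sqrt h1
  have hb : b ^ 2 = ξ2 := Real.sq_sqrt h2
  have hc : c ^ 2 = -ξ3 := by rw [← e3]; exact Real.sq_sqrt (abs_nonneg _)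
  have hd : d ^ 2 = -ξ4 := by rw [← e4]; exact Real.sq_sqrt (abs_nonneg _)
  have hab : Real.sqrt (ξ1 * ξ2) = a * b := Real.sqrt_mul h1 ξ2
  have hcd : Real.sqrt (ξ3 * ξ4) = c * d := by
    rw [show ξ3 * ξ4 = |ξ3| * |ξ4| by rw [e3, e4]; ring]
    exact Real.sqrt_mul (abs_nonneg _) _
  refine ⟨?_, by nlinarith⟩
  rw [hab, hcd]
  have hsq : a ^ 2 + b ^ 2 = c ^ 2 + d ^ 2 := by nlinarith
  nlinarith [sq_nonneg (a + b), sq_nonneg (c + d), hsq, ha, hb, hc, hd]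
end

section
/- For all real numbers ξ1, ξ2, ξ3 one has |ξ1|^{1/2} + |ξ2|^{1/2} + |ξ3|^{1/2} − |ξ1 + ξ2 + ξ3|^{1/2} ≥ (1/2)·m^{1/2}, where m denotes the second largest (i.e. the median) of the three numbers |ξ1|, |ξ2|, |ξ3|. -/
/-- Sorted version: for `0 ≤ a ≤ b ≤ c`,
`(1/2)√b ≤ √a + √b + √c - √(a+b+c)`. -/
lemma sorted_phase_aux (a b c : ℝ) (h0 : 0 ≤ a) (hab : a ≤ b) (hbc : b ≤ c) :
    (1 / 2) * Real.sqrt b ≤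
      Real.sqrt a + Real.sqrt b + Real.sqrt c - Real.sqrt (a + b + c) := by
  have h0b : 0 ≤ b := h0.trans hab
  have h0c : 0 ≤ c := h0b.trans hbc
  have hsa := Real.sq_sqrt h0
  have hsb := Real.sq_sqrt h0b
  have hsc := Real.sq_sqrt h0c
  have hna := Real.sqrt_nonneg a
  have hnb := Real.sqrt_nonneg b
  have hnc := Real.sqrt_nonneg c
  have hbcs : Real.sqrt b ≤ Real.sqrt c := Real.sqrt_le_sqrt hbc
  have h2 : a + b + c ≤ (Real.sqrt a + (1 / 2) * Real.sqrt b + Real.sqrt c) ^ 2 := by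
    nlinarith [mul_nonneg hna hnb, mul_nonneg hna hnc,
      mul_le_mul_of_nonneg_left hbcs hnb]
  have key : Real.sqrt (a + b + c) ≤
      Real.sqrt a + (1 / 2) * Real.sqrt b + Real.sqrt c := by
    calc Real.sqrt (a + b + c)
        ≤ Real.sqrt ((Real.sqrt a + (1 / 2) * Real.sqrt b + Real.sqrt c) ^ 2) :=
          Real.sqrt_le_sqrt h2
      _ = Real.sqrt a + (1 / 2) * Real.sqrt b + Real.sqrt c :=
          Real.sqrt_sq (by positivity)
  linarith

/-- Median bound with explicit nonnegative reals. -/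
lemma med_phase_aux (a b c : ℝ) (h0a : 0 ≤ a) (h0b : 0 ≤ b) (h0c : 0 ≤ c) :
    (1 / 2) * Real.sqrt (a + b + c - max a (max b c) - min a (min b c)) ≤
      Real.sqrt a + Real.sqrt b + Real.sqrt c - Real.sqrt (a + b + c) := by
  rcases le_total a b with h1 | h1 <;> rcases le_total b c with h2 | h2 <;>
    rcases le_total a c with h3 | h3
  · rw [max_eq_right h2, max_eq_right h3, min_eq_left h2, min_eq_left h1,
      show a + b + c - c - a = b by ring]
    exact sorted_phase_aux a b c h0a h1 h2
  · have hca : c = a := le_antisymm h3 (h1.trans h2)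
    have hba : b = a := le_antisymm (h2.trans h3) h1
    rw [hca, hba, max_self, max_self, min_self, min_self,
      show a + a + a - a - a = a by ring]
    have := sorted_phase_aux a a a h0a le_rfl le_rfl
    linarith
  · rw [max_eq_left h2, max_eq_right h1, min_eq_right h2, min_eq_left h3,
      show a + b + c - b - a = c by ring]
    have := sorted_phase_aux a c b h0a h3 h2
    rw [show a + c + b = a + b + c by ring] at this
    linarith
  · rw [max_eq_left h2, max_eq_right h1, min_eq_right h2, min_eq_right h3,
      show a + b + c - b - c = a by ring]
    have := sorted_phase_aux c a b h0c h3 h1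
    rw [show c + a + b = a + b + c by ring] at this
    linarith
  · rw [max_eq_right h2, max_eq_right h3, min_eq_left h2, min_eq_right h1,
      show a + b + c - c - b = a by ring]
    have := sorted_phase_aux b a c h0b h1 h3
    rw [show b + a + c = a + b + c by ring] at this
    linarith
  · rw [max_eq_right h2, max_eq_left h3, min_eq_left h2, min_eq_right h1,
      show a + b + c - a - b = c by ring]
    have := sorted_phase_aux b c a h0b h2 h3
    rw [show b + c + a = a + b + c by ring] at this
    linarith
  · have hca : c = a := le_antisymm (h2.trans h1) h3
    have hba : b = a := le_antisymm h1 (h3.trans h2)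
    rw [hca, hba, max_self, max_self, min_self, min_self,
      show a + a + a - a - a = a by ring]
    have := sorted_phase_aux a a a h0a le_rfl le_rfl
    linarith
  · rw [max_eq_left h2, max_eq_left h1, min_eq_right h2, min_eq_right h3,
      show a + b + c - a - c = b by ring]
    have := sorted_phase_aux c b a h0c h2 h1
    rw [show c + b + a = a + b + c by ring] at this
    linarith

/-- Quantitative lower bound for the non-resonant four-wave phase
`|ξ1|^(1/2) + |ξ2|^(1/2) + |ξ3|^(1/2) - |ξ1+ξ2+ξ3|^(1/2)` in terms of the median
(second largest) of `|ξ1|, |ξ2|, |ξ3|`. -/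
theorem phase_lower_bound_median (ξ1 ξ2 ξ3 : ℝ) :
    (1 / 2) * Real.sqrt (|ξ1| + |ξ2| + |ξ3| - max |ξ1| (max |ξ2| |ξ3|)
        - min |ξ1| (min |ξ2| |ξ3|)) ≤
      Real.sqrt |ξ1| + Real.sqrt |ξ2| + Real.sqrt |ξ3| - Real.sqrt |ξ1 + ξ2 + ξ3| := by
  have hmed := med_phase_aux |ξ1| |ξ2| |ξ3| (abs_nonneg _) (abs_nonneg _) (abs_nonneg _)
  have habs : |ξ1 + ξ2 + ξ3| ≤ |ξ1| + |ξ2| + |ξ3| := by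
    calc |ξ1 + ξ2 + ξ3| ≤ |ξ1 + ξ2| + |ξ3| := abs_add_le _ _
      _ ≤ |ξ1| + |ξ2| + |ξ3| := by linarith [abs_add_le ξ1 ξ2]
  have hsum : Real.sqrt |ξ1 + ξ2 + ξ3| ≤ Real.sqrt (|ξ1| + |ξ2| + |ξ3|) :=
    Real.sqrt_le_sqrt habs
  linarith
end

section
/- For all real numbers ξ, η, ρ with ξ + η + ρ = 0, one has (ξ² + η² + ρ² − 2|ξ||η| − 2|ξ||ρ| − 2|η||ρ|) · max(|ξ|, |η|, |ρ|) = −4·|ξ|·|η|·|ρ|. Equivalently, if (ξ, η, ρ) ≠ (0, 0, 0), then D(ξ, η, ρ) = −4|ξ||η||ρ| / max(|ξ|, |η|, |ρ|), where D(ξ, η, ρ) := |ξ|(|ξ| − |η| − |ρ|) + |η|(|η| − |ρ| − |ξ|) + |ρ|(|ρ| − |ξ| − |η|) = ξ² + η² + ρ² − 2|ξ||η| − 2|ξ||ρ| − 2|η||ρ|. -/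
private lemma key_lemma (b c : ℝ) (hb : 0 ≤ b) (hc : 0 ≤ c) :
    ((b + c) ^ 2 + b ^ 2 + c ^ 2 - 2 * (b + c) * b - 2 * (b + c) * c - 2 * b * c) *
      max (b + c) (max b c) = -(4 * (b + c) * b * c) := by
  have hmax : max (b + c) (max b c) = b + c :=
    max_eq_left (max_le (le_add_of_nonneg_right hc) (le_add_of_nonneg_left hb))
  rw [hmax]; ring

private lemma key (a b c : ℝ) (hb : 0 ≤ b) (hc : 0 ≤ c) (h : a = b + c) :
    (a ^ 2 + b ^ 2 + c ^ 2 - 2 * a * b - 2 * a * c - 2 * b * c) *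
      max a (max b c) = -(4 * a * b * c) := by
  subst h; exact key_lemma b c hb hc

/-- Exact value of the normal-form denominator
`D(ξ,η,ρ) = |ξ|(|ξ|-|η|-|ρ|) + |η|(|η|-|ρ|-|ξ|) + |ρ|(|ρ|-|ξ|-|η|)
          = ξ² + η² + ρ² - 2|ξ||η| - 2|ξ||ρ| - 2|η||ρ|`
on the hyperplane `ξ + η + ρ = 0`: in product form
`D · max(|ξ|,|η|,|ρ|) = -4|ξ||η||ρ|`, and in quotient form when `(ξ,η,ρ) ≠ (0,0,0)`. -/
theorem normal_form_denominator (ξ η ρ : ℝ) (hsum : ξ + η + ρ = 0) :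
    (ξ ^ 2 + η ^ 2 + ρ ^ 2 - 2 * |ξ| * |η| - 2 * |ξ| * |ρ| - 2 * |η| * |ρ|) *
        max |ξ| (max |η| |ρ|) = -(4 * |ξ| * |η| * |ρ|) ∧
      ((ξ, η, ρ) ≠ ((0 : ℝ), (0 : ℝ), (0 : ℝ)) →
        |ξ| * (|ξ| - |η| - |ρ|) + |η| * (|η| - |ρ| - |ξ|) + |ρ| * (|ρ| - |ξ| - |η|) =
          -(4 * |ξ| * |η| * |ρ|) / max |ξ| (max |η| |ρ|)) := by
  have habs : |ξ| = |η| + |ρ| ∨ |η| = |ξ| + |ρ| ∨ |ρ| = |ξ| + |η| := by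
    rcases abs_cases ξ with ⟨hx, hx'⟩ | ⟨hx, hx'⟩ <;>
      rcases abs_cases η with ⟨hy, hy'⟩ | ⟨hy, hy'⟩ <;>
      rcases abs_cases ρ with ⟨hz, hz'⟩ | ⟨hz, hz'⟩ <;>
      rw [hx, hy, hz] <;>
      first
        | (left; linarith)
        | (right; left; linarith)
        | (right; right; linarith)
  have hprod : (ξ ^ 2 + η ^ 2 + ρ ^ 2 - 2 * |ξ| * |η| - 2 * |ξ| * |ρ| - 2 * |η| * |ρ|) *
      max |ξ| (max |η| |ρ|) = -(4 * |ξ| * |η| * |ρ|) := by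
    rw [← sq_abs ξ, ← sq_abs η, ← sq_abs ρ]
    rcases habs with h | h | h
    · exact key |ξ| |η| |ρ| (abs_nonneg η) (abs_nonneg ρ) h
    · rw [max_left_comm]
      linear_combination key |η| |ξ| |ρ| (abs_nonneg ξ) (abs_nonneg ρ) h
    · rw [max_comm |η| |ρ|, max_left_comm]
      linear_combination key |ρ| |ξ| |η| (abs_nonneg ξ) (abs_nonneg η) h
  refine ⟨hprod, fun hne => ?_⟩
  have hone : ξ ≠ 0 ∨ η ≠ 0 ∨ ρ ≠ 0 := by
    by_contra h
    push_neg at h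
    exact hne (by simp [h.1, h.2.1, h.2.2])
  have hM : 0 < max |ξ| (max |η| |ρ|) := by
    rcases hone with h | h | h
    · exact lt_of_lt_of_le (abs_pos.mpr h) (le_max_left _ _)
    · exact lt_of_lt_of_le (abs_pos.mpr h)
        (le_trans (le_max_left _ _) (le_max_right _ _))
    · exact lt_of_lt_of_le (abs_pos.mpr h)
        (le_trans (le_max_right _ _) (le_max_right _ _))
  rw [eq_div_iff hM.ne']
  have hDD : |ξ| * (|ξ| - |η| - |ρ|) + |η| * (|η| - |ρ| - |ξ|) + |ρ| * (|ρ| - |ξ| - |η|) =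
      ξ ^ 2 + η ^ 2 + ρ ^ 2 - 2 * |ξ| * |η| - 2 * |ξ| * |ρ| - 2 * |η| * |ρ| := by
    rw [← sq_abs ξ, ← sq_abs η, ← sq_abs ρ]; ring
  rw [hDD, hprod]
end
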